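/- arXiv:2205.04146 — 2 statements merged into one kernel-verified Lean document; each statement's English description precedes it below -/
import Mathlib

section
/- Let w be a random vector in ℝᵐ with E[w] = 0 and E[w wᵀ] ≤ S (Loewner order) for a known positive semidefinite matrix S. Let a ∈ ℝᵐ, b ∈ ℝ, and p ∈ (0,1). If b ≤ 1 - √(p/(1-p))·‖S^{1/2} a‖₂, then for every such distribution of w, P(aᵀ w + b ≤ 1) ≥ p. -/
open MeasureTheory Matrix

/-!
Write `X = aᵀw` and `σ² = aᵀSa = ‖S^{1/2}a‖²`. Then `E X = 0` and `E X² = aᵀ E[wwᵀ] a ≤ σ²`, so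
Cantelli's inequality gives `P(X > t) ≤ σ² / (σ² + t²)` for `t = 1 - b`, and the SOC condition says
exactly `p σ² ≤ (1 - p) t²`, i.e. that this bound is at most `1 - p`. Cantelli's inequality itself
is Markov's inequality applied to `(X + σ²/t)²`.
-/

section
open scoped ComplexOrder

/-- The square root of a positive semidefinite matrix, as defined in the older Mathlib
(`Matrix.PosSemidef.sqrt`, since removed). -/
noncomputable def Matrix.PosSemidef.sqrt {n 𝕜 : Type*} [Fintype n] [RCLike 𝕜] [DecidableEq n]
    {A : Matrix n n 𝕜} (hA : A.PosSemidef) : Matrix n n 𝕜 :=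
  hA.1.eigenvectorUnitary.1 * diagonal ((↑) ∘ (√·) ∘ hA.1.eigenvalues) *
    (star hA.1.eigenvectorUnitary : Matrix n n 𝕜)

end

namespace Matrix.PosSemidef

open scoped ComplexOrder MatrixOrder

variable {n 𝕜 : Type*} [Fintype n] [RCLike 𝕜] [DecidableEq n] {A : Matrix n n 𝕜}

theorem sqrt_eq_cfcSqrt (hA : A.PosSemidef) : hA.sqrt = CFC.sqrt A := by
  rw [CFC.sqrt_eq_cfc, cfc_nnreal_eq_real _ A hA.nonneg, hA.1.cfc_eq, IsHermitian.cfc,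
    Unitary.conjStarAlgAut_apply, PosSemidef.sqrt]
  congr 3
  funext i
  simp [max_eq_left (hA.eigenvalues_nonneg i)]

theorem star_sqrt_mulVec_dotProduct_sqrt_mulVec (hA : A.PosSemidef) (x : n → 𝕜) :
    star (hA.sqrt *ᵥ x) ⬝ᵥ (hA.sqrt *ᵥ x) = star x ⬝ᵥ (A *ᵥ x) := by
  have hherm : hA.sqrtᴴ = hA.sqrt := by
    rw [sqrt_eq_cfcSqrt]
    exact (CFC.sqrt_nonneg A).posSemidef.isHermitian
  rw [star_mulVec, ← dotProduct_mulVec, mulVec_mulVec, hherm, sqrt_eq_cfcSqrt,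
    CFC.sqrt_mul_sqrt_self A hA.nonneg]

end Matrix.PosSemidef

section Moments

variable {Ω ι : Type*} [MeasurableSpace Ω] [Fintype ι]

noncomputable def secondMoment (μ : Measure Ω) (w : Ω → ι → ℝ) : Matrix ι ι ℝ :=
  Matrix.of fun i j => ∫ ω, w ω i * w ω j ∂μ

variable {μ : Measure Ω} {w : Ω → ι → ℝ}

theorem integrable_dotProduct (hw : ∀ i, Integrable (fun ω => w ω i) μ) (a : ι → ℝ) :
    Integrable (fun ω => a ⬝ᵥ w ω) μ :=
  integrable_finsetSum _ fun i _ => (hw i).const_mul (a i)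

theorem integral_dotProduct (hw : ∀ i, Integrable (fun ω => w ω i) μ) (a : ι → ℝ) :
    ∫ ω, a ⬝ᵥ w ω ∂μ = a ⬝ᵥ fun i => ∫ ω, w ω i ∂μ := by
  simp only [dotProduct, ← integral_const_mul]
  exact integral_finsetSum _ fun i _ => (hw i).const_mul (a i)

theorem dotProduct_sq_eq_sum (a x : ι → ℝ) :
    (a ⬝ᵥ x) ^ 2 = ∑ i, ∑ j, a i * a j * (x i * x j) := by
  rw [sq, dotProduct, Finset.sum_mul_sum]
  exact Finset.sum_congr rfl fun i _ => Finset.sum_congr rfl fun j _ => by ring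

theorem integrable_dotProduct_sq (hw : ∀ i j, Integrable (fun ω => w ω i * w ω j) μ)
    (a : ι → ℝ) : Integrable (fun ω => (a ⬝ᵥ w ω) ^ 2) μ := by
  simp only [dotProduct_sq_eq_sum]
  exact integrable_finsetSum _ fun i _ => integrable_finsetSum _ fun j _ => (hw i j).const_mul _

theorem integral_dotProduct_sq (hw : ∀ i j, Integrable (fun ω => w ω i * w ω j) μ)
    (a : ι → ℝ) : ∫ ω, (a ⬝ᵥ w ω) ^ 2 ∂μ = a ⬝ᵥ (secondMoment μ w *ᵥ a) := by
  simp only [dotProduct_sq_eq_sum]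
  rw [integral_finsetSum _ fun i _ => integrable_finsetSum _ fun j _ => (hw i j).const_mul _]
  simp only [dotProduct, mulVec, secondMoment, of_apply, Finset.mul_sum]
  refine Finset.sum_congr rfl fun i _ => ?_
  rw [integral_finsetSum _ fun j _ => (hw i j).const_mul _]
  exact Finset.sum_congr rfl fun j _ => by rw [integral_const_mul]; ring

end Moments

section Cantelli

variable {Ω : Type*} [MeasurableSpace Ω] {μ : Measure Ω} [IsProbabilityMeasure μ] {X : Ω → ℝ}

theorem integral_add_const_sq (hX : Integrable X μ) (hX2 : Integrable (fun ω => X ω ^ 2) μ)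
    (hmean : ∫ ω, X ω ∂μ = 0) (u : ℝ) :
    ∫ ω, (X ω + u) ^ 2 ∂μ = ∫ ω, X ω ^ 2 ∂μ + u ^ 2 := by
  have hexpand : (fun ω => (X ω + u) ^ 2) = fun ω => X ω ^ 2 + (2 * u * X ω + u ^ 2) := by
    funext ω; ring
  have hlin : Integrable (fun ω => 2 * u * X ω) μ := hX.const_mul _
  have haffine : Integrable (fun ω => 2 * u * X ω + u ^ 2) μ := hlin.add (integrable_const _)
  rw [hexpand, integral_add hX2 haffine, integral_add hlin (integrable_const _),
    integral_const_mul, hmean]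
  simp

theorem cantelli_of_pos (hX : Integrable X μ) (hX2 : Integrable (fun ω => X ω ^ 2) μ)
    (hmean : ∫ ω, X ω ∂μ = 0) {v t : ℝ} (hv : ∫ ω, X ω ^ 2 ∂μ ≤ v) (ht : 0 < t) :
    μ.real {ω | t < X ω} ≤ v / (v + t ^ 2) := by
  have hv0 : 0 ≤ v := (integral_nonneg fun ω => sq_nonneg (X ω)).trans hv
  -- Markov's inequality for `(X + u)²`; the shift `u = v / t` minimises `(v + u²) / (t + u)²`
  set u := v / t with hu
  have hu0 : 0 ≤ u := by positivity
  have hsub : {ω | t < X ω} ⊆ {ω | (t + u) ^ 2 ≤ (X ω + u) ^ 2} := fun ω (hω : t < X ω) =>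
    pow_le_pow_left₀ (by positivity : (0 : ℝ) ≤ t + u) (by linarith) 2
  have hmarkov := mul_meas_ge_le_integral_of_nonneg (ae_of_all μ fun ω => sq_nonneg (X ω + u))
    (((hX2.add (hX.const_mul (2 * u))).add (integrable_const (u ^ 2))).congr
      (ae_of_all μ fun ω => by simp only [Pi.add_apply]; ring)) ((t + u) ^ 2)
  rw [integral_add_const_sq hX hX2 hmean] at hmarkov
  calc μ.real {ω | t < X ω} ≤ μ.real {ω | (t + u) ^ 2 ≤ (X ω + u) ^ 2} := measureReal_mono hsub
    _ ≤ (v + u ^ 2) / (t + u) ^ 2 := by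
      rw [le_div_iff₀ (by positivity)]; linarith
    _ = v / (v + t ^ 2) := by rw [hu]; field_simp; ring

theorem cantelli (hX : Integrable X μ) (hX2 : Integrable (fun ω => X ω ^ 2) μ)
    (hmean : ∫ ω, X ω ∂μ = 0) {v t : ℝ} (hv : ∫ ω, X ω ^ 2 ∂μ ≤ v) (ht : 0 ≤ t) :
    μ.real {ω | t < X ω} ≤ v / (v + t ^ 2) := by
  rcases ht.lt_or_eq with ht | rfl
  · exact cantelli_of_pos hX hX2 hmean hv ht
  have hv0 : 0 ≤ v := (integral_nonneg fun ω => sq_nonneg (X ω)).trans hv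
  rcases hv0.lt_or_eq with hv0 | rfl
  · simp [div_self hv0.ne', measureReal_le_one]
  -- `0 / 0 = 0`: here `X = 0` almost everywhere
  have hzero : ∀ᵐ ω ∂μ, X ω ^ 2 = 0 :=
    (integral_eq_zero_iff_of_nonneg (fun ω => sq_nonneg (X ω)) hX2).mp
      (le_antisymm hv (integral_nonneg fun ω => sq_nonneg (X ω)))
  have hnull : μ {ω | 0 < X ω} = 0 :=
    measure_mono_null (fun ω (hω : 0 < X ω) => pow_ne_zero 2 hω.ne') (ae_iff.mp hzero)
  simp [measureReal_def, hnull]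

end Cantelli

theorem ofReal_le_measure_of_measureReal_compl_le {Ω : Type*} [MeasurableSpace Ω]
    {μ : Measure Ω} [IsProbabilityMeasure μ] {s : Set Ω} {p : ℝ} (h : μ.real sᶜ ≤ 1 - p) :
    ENNReal.ofReal p ≤ μ s := by
  refine ENNReal.ofReal_le_of_le_toReal ?_
  have hcover : 1 ≤ μ.real s + μ.real sᶜ := by
    simpa [Set.union_compl_self] using measureReal_union_le (μ := μ) s sᶜ
  rw [← measureReal_def]
  linarith

theorem div_add_sq_le_one_sub {p v t : ℝ} (hp : p ∈ Set.Ioo (0 : ℝ) 1) (hv : 0 ≤ v)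
    (h : Real.sqrt (p / (1 - p)) * Real.sqrt v ≤ t) : v / (v + t ^ 2) ≤ 1 - p := by
  obtain ⟨hp0, hp1⟩ := hp
  have hq : 0 < 1 - p := by linarith
  rw [← Real.sqrt_mul (div_nonneg hp0.le hq.le), Real.sqrt_le_iff] at h
  obtain ⟨ht, hsq⟩ := h
  refine div_le_of_le_mul₀ (by positivity) hq.le ?_
  have : p * v ≤ (1 - p) * t ^ 2 := by
    calc p * v = (1 - p) * (p / (1 - p) * v) := by field_simp
      _ ≤ (1 - p) * t ^ 2 := mul_le_mul_of_nonneg_left hsq hq.le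
  nlinarith

theorem stmt11_general {Ω : Type*} [MeasureSpace Ω] (μ : Measure Ω) [IsProbabilityMeasure μ]
    {m : ℕ} (w : Ω → Fin m → ℝ)
    (hint1 : ∀ i, Integrable (fun ω => w ω i) μ)
    (hint2 : ∀ i j, Integrable (fun ω => w ω i * w ω j) μ)
    (hmean : ∀ i, ∫ ω, w ω i ∂μ = 0)
    (S : Matrix (Fin m) (Fin m) ℝ) (hS : S.PosSemidef)
    (hmom : (S - Matrix.of fun i j => ∫ ω, w ω i * w ω j ∂μ).PosSemidef)
    (a : Fin m → ℝ) (b p : ℝ) (hp : p ∈ Set.Ioo (0 : ℝ) 1)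
    (hsoc : b ≤ 1 - Real.sqrt (p / (1 - p)) *
      Real.sqrt ((hS.sqrt *ᵥ a) ⬝ᵥ (hS.sqrt *ᵥ a))) :
    ENNReal.ofReal p ≤ μ {ω | a ⬝ᵥ w ω + b ≤ 1} := by
  have hnorm : (hS.sqrt *ᵥ a) ⬝ᵥ (hS.sqrt *ᵥ a) = a ⬝ᵥ (S *ᵥ a) := by
    simpa using hS.star_sqrt_mulVec_dotProduct_sqrt_mulVec a
  have hvar : ∫ ω, (a ⬝ᵥ w ω) ^ 2 ∂μ ≤ a ⬝ᵥ (S *ᵥ a) := by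
    have hloewner := (show (S - secondMoment μ w).PosSemidef from hmom).dotProduct_mulVec_nonneg a
    simp only [star_trivial, sub_mulVec, dotProduct_sub, sub_nonneg] at hloewner
    rwa [integral_dotProduct_sq hint2]
  have hcentered : ∫ ω, a ⬝ᵥ w ω ∂μ = 0 := by
    simp [integral_dotProduct hint1, hmean]
  have hmargin : Real.sqrt (p / (1 - p)) * Real.sqrt (a ⬝ᵥ (S *ᵥ a)) ≤ 1 - b := by
    rw [hnorm] at hsoc
    linarith
  have hviolation : {ω | a ⬝ᵥ w ω + b ≤ 1}ᶜ = {ω | 1 - b < a ⬝ᵥ w ω} := by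
    ext ω
    simp [sub_lt_iff_lt_add, add_comm]
  refine ofReal_le_measure_of_measureReal_compl_le ?_
  calc μ.real {ω | a ⬝ᵥ w ω + b ≤ 1}ᶜ
      ≤ a ⬝ᵥ (S *ᵥ a) / (a ⬝ᵥ (S *ᵥ a) + (1 - b) ^ 2) := by
        rw [hviolation]
        exact cantelli (integrable_dotProduct hint1 a) (integrable_dotProduct_sq hint2 a)
          hcentered hvar (le_trans (by positivity) hmargin)
    _ ≤ 1 - p := div_add_sq_le_one_sub hp (hS.dotProduct_mulVec_nonneg a) hmargin

/-- distributionally robust SOC chance-constraint tightening: if E[w] = 0,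
E[wwᵀ] ≤ S and b ≤ 1 - √(p/(1-p))·‖S^{1/2}a‖₂, then P(aᵀw + b ≤ 1) ≥ p. -/
theorem stmt11 {Ω : Type*} [MeasureSpace Ω] (μ : Measure Ω) [IsProbabilityMeasure μ]
    {m : ℕ} (w : Ω → Fin m → ℝ) (hmeas : Measurable w)
    (hint1 : ∀ i, Integrable (fun ω => w ω i) μ)
    (hint2 : ∀ i j, Integrable (fun ω => w ω i * w ω j) μ)
    (hmean : ∀ i, ∫ ω, w ω i ∂μ = 0)
    (S : Matrix (Fin m) (Fin m) ℝ) (hS : S.PosSemidef)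
    (hmom : (S - Matrix.of fun i j => ∫ ω, w ω i * w ω j ∂μ).PosSemidef)
    (a : Fin m → ℝ) (b p : ℝ) (hp : p ∈ Set.Ioo (0 : ℝ) 1)
    (hsoc : b ≤ 1 - Real.sqrt (p / (1 - p)) *
      Real.sqrt ((hS.sqrt *ᵥ a) ⬝ᵥ (hS.sqrt *ᵥ a))) :
    ENNReal.ofReal p ≤ μ {ω | a ⬝ᵥ w ω + b ≤ 1} :=
  stmt11_general μ w hint1 hint2 hmean S hS hmom a b p hp hsoc
end

section
/- Let M̄ be a strictly block lower-triangular Nn_u × Nn_w matrix, B̄ a block lower-triangular matrix with zero diagonal blocks (the prediction input-to-state map), and E† a left inverse related matrix such that I + M̄ E† B̄ is invertible. Define K̄ = (I + M̄ E† B̄)^{-1} M̄ E†. Then M̄ = K̄ (I - B̄ K̄)^{-1} Ē whenever Ē E† B̄ = B̄ acting on the relevant subspace, and in particular (I - B̄ K̄) is invertible. -/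
open Matrix

/-- equivalence between disturbance feedback and error feedback gains:
with K̄ = (I + M̄E†B̄)⁻¹M̄E†, under Ē E† B̄ = B̄ and E†Ē = I (E full column rank),
the matrix I - B̄K̄ is invertible and M̄ = K̄(I - B̄K̄)⁻¹Ē. -/
theorem stmt16 {nu nx nw : ℕ}
    (Mbar : Matrix (Fin nu) (Fin nw) ℝ)   -- disturbance feedback gain
    (Bbar : Matrix (Fin nx) (Fin nu) ℝ)   -- input-to-state prediction map
    (Ebar : Matrix (Fin nx) (Fin nw) ℝ)   -- disturbance-to-state prediction map
    (Edag : Matrix (Fin nw) (Fin nx) ℝ)   -- pseudoinverse of Ē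
    (hEB : Ebar * Edag * Bbar = Bbar)
    (hEd : Edag * Ebar = 1)
    (hunit : IsUnit (1 + Mbar * Edag * Bbar)) :
    letI Kbar : Matrix (Fin nu) (Fin nx) ℝ := (1 + Mbar * Edag * Bbar)⁻¹ * (Mbar * Edag)
    IsUnit (1 - Bbar * Kbar) ∧ Mbar = Kbar * (1 - Bbar * Kbar)⁻¹ * Ebar := by
  set X : Matrix (Fin nu) (Fin nx) ℝ := Mbar * Edag with hX
  set A : Matrix (Fin nu) (Fin nu) ℝ := 1 + Mbar * Edag * Bbar with hA
  have hAX : A = 1 + X * Bbar := by rw [hA, hX]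
  have hAinv : A * A⁻¹ = 1 := Matrix.mul_nonsing_inv A (A.isUnit_iff_isUnit_det.mp hunit)
  have hinvA : A⁻¹ * A = 1 := Matrix.nonsing_inv_mul A (A.isUnit_iff_isUnit_det.mp hunit)
  set C : Matrix (Fin nx) (Fin nx) ℝ := 1 + Bbar * X with hC
  set Kbar : Matrix (Fin nu) (Fin nx) ℝ := A⁻¹ * X with hK
  have hCB : C * Bbar = Bbar * A := by
    rw [hC, hAX, Matrix.add_mul, Matrix.mul_add, Matrix.one_mul, Matrix.mul_one, Matrix.mul_assoc]
  have hXC : X * C = A * X := by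
    rw [hC, hAX, Matrix.add_mul, Matrix.mul_add, Matrix.one_mul, Matrix.mul_one, ← Matrix.mul_assoc]
  have hKC : Kbar * C = X := by
    rw [hK, Matrix.mul_assoc, hXC, ← Matrix.mul_assoc, hinvA, Matrix.one_mul]
  have h1 : C * (1 - Bbar * Kbar) = 1 := by
    have e : C * (1 - Bbar * Kbar) = C - C * Bbar * Kbar := by
      rw [Matrix.mul_sub, Matrix.mul_one, Matrix.mul_assoc]
    rw [e, hCB, hK, Matrix.mul_assoc, ← Matrix.mul_assoc A A⁻¹ X, hAinv, Matrix.one_mul, hC, add_sub_cancel_right]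
  have h2 : (1 - Bbar * Kbar) * C = 1 := by
    have e : (1 - Bbar * Kbar) * C = C - Bbar * (Kbar * C) := by
      rw [Matrix.sub_mul, Matrix.one_mul, Matrix.mul_assoc]
    rw [e, hKC, hC, add_sub_cancel_right]
  have hu : IsUnit (1 - Bbar * Kbar) := ⟨⟨1 - Bbar * Kbar, C, h2, h1⟩, rfl⟩
  refine ⟨hu, ?_⟩
  have hinvC : (1 - Bbar * Kbar)⁻¹ = C := Matrix.inv_eq_right_inv h2
  rw [hinvC, hKC, hX, Matrix.mul_assoc, hEd, Matrix.mul_one]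
end
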